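/- Let Y ∈ ℝ^{7×7} be symmetric positive semidefinite with rank 1, Y(7,7) = 1, trace(Y(1:3,1:3)) = trace(Y(4:6,4:6)) = 1, and trace(Y(1:3,4:6)) = 0. Then the vectors r₁ = Y(1:3,7) and r₂ = Y(4:6,7) are orthonormal, and the matrix with columns r₁, r₂, r₁ × r₂ belongs to SO(3). -/
import Mathlib


open Matrix

lemma rank_one_psd_factor (Y : Matrix (Fin 7) (Fin 7) ℝ) (hY : Y.PosSemidef)
    (hrank : Y.rank = 1) (h77 : Y 6 6 = 1) : ∀ i j, Y i j = Y i 6 * Y j 6 := by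
  have hsym : ∀ i j, Y j i = Y i j := fun i j => by
    have := hY.isHermitian; rw [Matrix.IsHermitian] at this
    conv_lhs => rw [← this]
    simp [Matrix.conjTranspose_apply]
  obtain ⟨v, hv0, hv⟩ := finrank_eq_one_iff'.mp hrank
  have hcol : ∀ j : Fin 7, ∃ c : ℝ, ∀ i, c * (v : Fin 7 → ℝ) i = Y i j := by
    intro j
    obtain ⟨c, hc⟩ := hv ⟨Y *ᵥ Pi.single j 1, ⟨Pi.single j 1, rfl⟩⟩
    exact ⟨c, fun i => by
      have := congrArg (fun w : LinearMap.range Y.mulVecLin => (w : Fin 7 → ℝ) i) hc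
      simpa using this⟩
  choose c hc using hcol
  intro i j
  have h1 := hc j i
  have h2 := hc 6 i
  have h3 := hc 6 j
  have h4 := hc 6 6
  have h5 := hc j 6
  have hs : Y 6 j = Y j 6 := hsym j 6
  rw [h77] at h4
  have key : Y i j * (c 6 * (v : Fin 7 → ℝ) 6) = Y i 6 * Y j 6 := by
    rw [← h1, ← h2, ← h3]
    have hcj : c j * (v : Fin 7 → ℝ) 6 = c 6 * (v : Fin 7 → ℝ) j := by
      rw [h5, h3, hs]
    linear_combination (c 6 * (v : Fin 7 → ℝ) i) * hcj
  rw [h4, mul_one] at key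
  exact key

theorem sdp_rank_one_exact_recovery (Y : Matrix (Fin 7) (Fin 7) ℝ)
    (hY : Y.PosSemidef) (hrank : Y.rank = 1) (h77 : Y 6 6 = 1)
    (htr1 : Y 0 0 + Y 1 1 + Y 2 2 = 1) (htr2 : Y 3 3 + Y 4 4 + Y 5 5 = 1)
    (htr12 : Y 0 3 + Y 1 4 + Y 2 5 = 0)
    (r₁ r₂ : Fin 3 → ℝ)
    (hr₁ : r₁ = ![Y 0 6, Y 1 6, Y 2 6]) (hr₂ : r₂ = ![Y 3 6, Y 4 6, Y 5 6])
    (R : Matrix (Fin 3) (Fin 3) ℝ)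
    (hR : R = Matrix.of fun i j => ![r₁, r₂, crossProduct r₁ r₂] j i) :
    r₁ ⬝ᵥ r₁ = 1 ∧ r₂ ⬝ᵥ r₂ = 1 ∧ r₁ ⬝ᵥ r₂ = 0 ∧ Rᵀ * R = 1 ∧ R.det = 1 := by
  have key := rank_one_psd_factor Y hY hrank h77
  rw [key 0 0, key 1 1, key 2 2] at htr1
  rw [key 3 3, key 4 4, key 5 5] at htr2
  rw [key 0 3, key 1 4, key 2 5] at htr12
  subst hr₁ hr₂ hR
  have cross : ∀ (a b : Fin 3 → ℝ), crossProduct a b =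
      ![a 1 * b 2 - a 2 * b 1, a 2 * b 0 - a 0 * b 2, a 0 * b 1 - a 1 * b 0] := by
    intro a b
    simp [crossProduct]
  refine ⟨?_, ?_, ?_, ?_, ?_⟩
  · simp [dotProduct, Fin.sum_univ_three]
    linear_combination htr1
  · simp [dotProduct, Fin.sum_univ_three]
    linear_combination htr2
  · simp [dotProduct, Fin.sum_univ_three]
    linear_combination htr12
  · ext i j
    fin_cases i <;> fin_cases j <;>
      simp [Matrix.mul_apply, Fin.sum_univ_three, cross, Matrix.one_apply]
    · linear_combination htr1
    · linear_combination htr12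
    · ring
    · linear_combination htr12
    · linear_combination htr2
    · ring
    · ring
    · ring
    · linear_combination (Y 3 6 * Y 3 6 + Y 4 6 * Y 4 6 + Y 5 6 * Y 5 6) * htr1 + htr2 - (Y 0 6 * Y 3 6 + Y 1 6 * Y 4 6 + Y 2 6 * Y 5 6) * htr12
  · rw [Matrix.det_fin_three]
    simp [cross]
    linear_combination (Y 3 6 * Y 3 6 + Y 4 6 * Y 4 6 + Y 5 6 * Y 5 6) * htr1 +
      htr2 - (Y 0 6 * Y 3 6 + Y 1 6 * Y 4 6 + Y 2 6 * Y 5 6) * htr12
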